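/- arXiv:math/0204242 — 2 statements merged into one kernel-verified Lean document; each statement's English description precedes it below -/
import Mathlib

section
/- Let m ≥ 3 and let A be the Artin group of type I_2(m) with standard epimorphism μ: A → W onto the dihedral Coxeter group of type I_2(m). Then the colored Artin group CA = ker μ is a characteristic subgroup of A. -/
open Function

/-- The alternating word `⟨i j⟩^m = i j i j ⋯` with `m` factors, in the free group. -/
def altWord {α : Type*} (i j : α) : ℕ → FreeGroup α
  | 0 => 1
  | m + 1 => FreeGroup.of i * altWord j i m

/-- The braid relations of an Artin group of type `M` (an entry `0` encodes `∞`). -/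
def artinRels {n : ℕ} (M : Matrix (Fin n) (Fin n) ℕ) : Set (FreeGroup (Fin n)) :=
  {r | ∃ i j : Fin n, i ≠ j ∧ M i j ≠ 0 ∧
      r = altWord i j (M i j) * (altWord j i (M i j))⁻¹}

/-- The relations of the Coxeter group of type `M`. -/
def coxRels {n : ℕ} (M : Matrix (Fin n) (Fin n) ℕ) : Set (FreeGroup (Fin n)) :=
  artinRels M ∪ {r | ∃ i : Fin n, r = FreeGroup.of i ^ 2}

/-- The Artin group of type `M`. -/
abbrev ArtinGroup {n : ℕ} (M : Matrix (Fin n) (Fin n) ℕ) : Type :=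
  PresentedGroup (artinRels M)

/-- The Coxeter group of type `M`, as the quotient of the Artin group by `σᵢ² = 1`. -/
abbrev CoxGroup {n : ℕ} (M : Matrix (Fin n) (Fin n) ℕ) : Type :=
  PresentedGroup (coxRels M)

/-- The standard generators `σᵢ` of the Artin group. -/
def σA {n : ℕ} (M : Matrix (Fin n) (Fin n) ℕ) (i : Fin n) : ArtinGroup M :=
  PresentedGroup.of i

/-- The standard generators `sᵢ` of the Coxeter group. -/
def sC {n : ℕ} (M : Matrix (Fin n) (Fin n) ℕ) (i : Fin n) : CoxGroup M :=
  PresentedGroup.of i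

lemma lift_of_eq_mk {n : ℕ} (M : Matrix (Fin n) (Fin n) ℕ) (r : FreeGroup (Fin n)) :
    FreeGroup.lift (fun i => (PresentedGroup.of i : CoxGroup M)) r
      = PresentedGroup.mk (coxRels M) r := by
  have h : (FreeGroup.lift (fun i => (PresentedGroup.of i : CoxGroup M)))
      = PresentedGroup.mk (coxRels M) :=
    FreeGroup.ext_hom _ _ (fun x => by simp [PresentedGroup.of])
  rw [h]

/-- The standard epimorphism `μ : A → W`. -/
def stdEpi {n : ℕ} (M : Matrix (Fin n) (Fin n) ℕ) : ArtinGroup M →* CoxGroup M :=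
  PresentedGroup.toGroup (f := fun i => (PresentedGroup.of i : CoxGroup M)) (by
    intro r hr
    rw [lift_of_eq_mk]
    exact (QuotientGroup.eq_one_iff r).mpr
      (Subgroup.subset_normalClosure (Set.mem_union_left _ hr)))

@[simp] lemma stdEpi_of {n : ℕ} (M : Matrix (Fin n) (Fin n) ℕ) (i : Fin n) :
    stdEpi M (σA M i) = sC M i :=
  PresentedGroup.toGroup.of _

/-- `φ : A → W` is ordinary if it is `α ∘ μ` for some automorphism `α` of `W`. -/
def Ordinary {n : ℕ} {M : Matrix (Fin n) (Fin n) ℕ}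
    (φ : ArtinGroup M →* CoxGroup M) : Prop :=
  ∃ α : CoxGroup M ≃* CoxGroup M, φ = α.toMonoidHom.comp (stdEpi M)

/-- The Coxeter matrix of type `I₂(m)`. -/
def I2 (m : ℕ) : Matrix (Fin 2) (Fin 2) ℕ := fun i j => if i = j then 1 else m

/-!
`ker μ` is the normal closure of the squares `σᵢ²`, so it suffices that each `μ (Φ σᵢ)` is an
involution. In a group generated by two involutions `s, t` every element is `(st)ʲ` or `(st)ʲ s`,
and the elements of the second kind, the odd ones, are involutions; hence it suffices that `Φ σᵢ`
has odd exponent sum.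

For odd `m` every homomorphism from `A` to an abelian group agrees on `σ₀` and `σ₁`, and the parity
of the exponent sum composed with `Φ` is nontrivial, hence odd on both generators.

For `m = 2n`, `Φ` acts on the abelianization `ℤ²` by some `C ∈ GL₂(ℤ)`. The central element
`(σ₀σ₁)ⁿ` is mapped to a central element, and an element commuting with `σ₀σ₁` has equal exponent
sums in `σ₀` and in `σ₁`; so the two rows of `C` have equal sums. Modulo 2 the only invertible
matrices with equal row sums are `1` and the swap, whose column sums are odd.
-/

open Multiplicative

section AltProd

variable {G H : Type*} [Group G] [Group H]

def altProd (a b : G) : ℕ → G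
  | 0 => 1
  | k + 1 => a * altProd b a k

@[simp] lemma altProd_zero (a b : G) : altProd a b 0 = 1 := rfl

lemma altProd_succ (a b : G) (k : ℕ) : altProd a b (k + 1) = a * altProd b a k := rfl

lemma lift_altWord {α : Type*} (f : α → G) (i j : α) (k : ℕ) :
    FreeGroup.lift f (altWord i j k) = altProd (f i) (f j) k := by
  induction k generalizing i j with
  | zero => simp [altWord]
  | succ k ih => simp [altWord, altProd_succ, ih]

lemma map_altProd (φ : G →* H) (a b : G) (k : ℕ) :
    φ (altProd a b k) = altProd (φ a) (φ b) k := by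
  induction k generalizing a b with
  | zero => simp
  | succ k ih => simp [altProd_succ, ih]

lemma altProd_two_mul (a b : G) (k : ℕ) : altProd a b (2 * k) = (a * b) ^ k := by
  induction k with
  | zero => simp
  | succ k ih => rw [Nat.mul_succ, altProd_succ, altProd_succ, ih, pow_succ', mul_assoc]

lemma altProd_two_mul_add_one (a b : G) (k : ℕ) :
    altProd a b (2 * k + 1) = (a * b) ^ k * a := by
  rw [altProd_succ, altProd_two_mul, mul_pow_mul]

end AltProd

namespace ArtinGroup

variable {n : ℕ} {M : Matrix (Fin n) (Fin n) ℕ} {G : Type*} [Group G]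

def lift (f : Fin n → G)
    (hf : ∀ i j, altProd (f i) (f j) (M i j) = altProd (f j) (f i) (M i j)) :
    ArtinGroup M →* G :=
  PresentedGroup.toGroup (f := f) (by
    rintro r ⟨i, j, -, -, rfl⟩
    rw [map_mul, map_inv, lift_altWord, lift_altWord, hf, mul_inv_cancel])

@[simp] lemma lift_σA (f : Fin n → G)
    (hf : ∀ i j, altProd (f i) (f j) (M i j) = altProd (f j) (f i) (M i j)) (i : Fin n) :
    lift f hf (σA M i) = f i :=
  PresentedGroup.toGroup.of _

lemma altProd_σA (i j : Fin n) :
    altProd (σA M i) (σA M j) (M i j) = altProd (σA M j) (σA M i) (M i j) := by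
  by_cases hrel : i ≠ j ∧ M i j ≠ 0
  · have h := PresentedGroup.one_of_mem (rels := artinRels M) ⟨i, j, hrel.1, hrel.2, rfl⟩
    rwa [FreeGroup.lift_unique (f := σA M) _ fun _ => rfl, map_mul, map_inv,
      mul_inv_eq_one, lift_altWord, lift_altWord] at h
  · obtain rfl | hzero : i = j ∨ M i j = 0 := by tauto
    · rfl
    · simp [hzero]

lemma hom_ext_fin_two {M : Matrix (Fin 2) (Fin 2) ℕ} {φ ψ : ArtinGroup M →* G}
    (h₀ : φ (σA M 0) = ψ (σA M 0)) (h₁ : φ (σA M 1) = ψ (σA M 1)) : φ = ψ :=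
  PresentedGroup.ext fun i => by fin_cases i <;> assumption

end ArtinGroup

namespace CoxGroup

variable {n : ℕ} {M : Matrix (Fin n) (Fin n) ℕ} {G : Type*} [Group G]

def lift (f : Fin n → G)
    (hf : ∀ i j, altProd (f i) (f j) (M i j) = altProd (f j) (f i) (M i j))
    (hsq : ∀ i, f i ^ 2 = 1) : CoxGroup M →* G :=
  PresentedGroup.toGroup (f := f) (by
    rintro r (⟨i, j, -, -, rfl⟩ | ⟨i, rfl⟩)
    · rw [map_mul, map_inv, lift_altWord, lift_altWord, hf, mul_inv_cancel]
    · rw [map_pow, FreeGroup.lift_apply_of, hsq])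

@[simp] lemma lift_sC (f : Fin n → G)
    (hf : ∀ i j, altProd (f i) (f j) (M i j) = altProd (f j) (f i) (M i j))
    (hsq : ∀ i, f i ^ 2 = 1) (i : Fin n) :
    lift f hf hsq (sC M i) = f i :=
  PresentedGroup.toGroup.of _

lemma sC_sq (i : Fin n) : sC M i ^ 2 = 1 :=
  PresentedGroup.one_of_mem (Or.inr ⟨i, rfl⟩)

variable (M) in
def sign : CoxGroup M →* Multiplicative (ZMod 2) :=
  lift (fun _ => ofAdd 1) (fun _ _ => rfl) (fun _ => rfl)

@[simp] lemma sign_sC (i : Fin n) : sign M (sC M i) = ofAdd 1 :=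
  lift_sC _ _ _ i

end CoxGroup

lemma ker_stdEpi {n : ℕ} (M : Matrix (Fin n) (Fin n) ℕ) :
    (stdEpi M).ker = Subgroup.normalClosure (Set.range fun i => σA M i ^ 2) := by
  set K := Subgroup.normalClosure (Set.range fun i => σA M i ^ 2)
  apply le_antisymm
  · let β : CoxGroup M →* ArtinGroup M ⧸ K :=
      CoxGroup.lift (fun i => QuotientGroup.mk' K (σA M i))
        (fun i j => by rw [← map_altProd, ← map_altProd, ArtinGroup.altProd_σA])
        (fun i => by
          rw [← map_pow, QuotientGroup.mk'_apply, QuotientGroup.eq_one_iff]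
          exact Subgroup.subset_normalClosure ⟨i, rfl⟩)
    have hβ : β.comp (stdEpi M) = QuotientGroup.mk' K := PresentedGroup.ext fun i => by
      change β (stdEpi M (σA M i)) = _
      rw [stdEpi_of, CoxGroup.lift_sC]
      rfl
    intro x hx
    rw [← QuotientGroup.eq_one_iff, ← QuotientGroup.mk'_apply, ← hβ, MonoidHom.comp_apply, hx,
      map_one]
  · refine Subgroup.normalClosure_le_normal ?_
    rintro _ ⟨i, rfl⟩
    rw [SetLike.mem_coe, MonoidHom.mem_ker, map_pow, stdEpi_of, CoxGroup.sC_sq]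

section TwoInvolutions

variable {G : Type*} [Group G] {s t : G}

lemma exists_zpow_of_mem_closure_pair (hs : s ^ 2 = 1) (ht : t ^ 2 = 1) {w : G}
    (hw : w ∈ Subgroup.closure {s, t}) :
    ∃ j : ℤ, w = (s * t) ^ j ∨ w = (s * t) ^ j * s := by
  have hs' : s⁻¹ = s := inv_eq_of_mul_eq_one_right (by rw [← sq, hs])
  have ht' : t⁻¹ = t := inv_eq_of_mul_eq_one_right (by rw [← sq, ht])
  have key : ∀ x y : G, y ∈ ({s, t} : Set G) →
      (∃ j : ℤ, x = (s * t) ^ j ∨ x = (s * t) ^ j * s) →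
      ∃ j : ℤ, x * y = (s * t) ^ j ∨ x * y = (s * t) ^ j * s := by
    rintro x y hy ⟨j, rfl | rfl⟩ <;> obtain hy | hy := hy <;> subst y
    · exact ⟨j, Or.inr rfl⟩
    · refine ⟨j - 1, Or.inr ?_⟩
      rw [zpow_sub_one, mul_assoc, mul_inv_rev, inv_mul_cancel_right, ht']
    · exact ⟨j, Or.inl (by rw [mul_assoc, ← sq, hs, mul_one])⟩
    · exact ⟨j + 1, Or.inl (by rw [zpow_add_one, mul_assoc])⟩
  induction hw using Subgroup.closure_induction_right with
  | one => exact ⟨0, Or.inl (zpow_zero _).symm⟩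
  | mul_right x _ y hy ih => exact key x y hy ih
  | mul_inv_cancel x _ y hy ih =>
    exact key x y⁻¹ (by obtain rfl | rfl := hy <;> simp [hs', ht']) ih

lemma zpow_mul_sq_eq_one (hs : s ^ 2 = 1) (ht : t ^ 2 = 1) (j : ℤ) :
    ((s * t) ^ j * s) ^ 2 = 1 := by
  have hs' : s⁻¹ = s := inv_eq_of_mul_eq_one_right (by rw [← sq, hs])
  have ht' : t⁻¹ = t := inv_eq_of_mul_eq_one_right (by rw [← sq, ht])
  have hconj : s * (s * t) * s⁻¹ = (s * t)⁻¹ := by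
    rw [mul_inv_rev, hs', ht', ← mul_assoc, ← sq, hs, one_mul]
  calc ((s * t) ^ j * s) ^ 2 = (s * t) ^ j * ((s * (s * t) * s⁻¹) ^ j) := by
        rw [conj_zpow, sq, hs']; group
    _ = 1 := by rw [hconj, inv_zpow, mul_inv_cancel]

lemma sq_eq_one_of_mem_closure_pair (hs : s ^ 2 = 1) (ht : t ^ 2 = 1)
    (ε : G →* Multiplicative (ZMod 2)) (hεs : ε s = ofAdd 1) (hεt : ε t = ofAdd 1) {w : G}
    (hw : w ∈ Subgroup.closure {s, t}) (hεw : ε w = ofAdd 1) : w ^ 2 = 1 := by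
  obtain ⟨j, rfl | rfl⟩ := exists_zpow_of_mem_closure_pair hs ht hw
  · have hρ : ε (s * t) = 1 := by rw [map_mul, hεs, hεt]; rfl
    rw [map_zpow, hρ, one_zpow] at hεw
    exact absurd hεw (by decide)
  · exact zpow_mul_sq_eq_one hs ht j

end TwoInvolutions

lemma CoxGroup.sq_eq_one_of_sign {M : Matrix (Fin 2) (Fin 2) ℕ} {w : CoxGroup M}
    (hw : CoxGroup.sign M w = ofAdd 1) : w ^ 2 = 1 := by
  refine sq_eq_one_of_mem_closure_pair (CoxGroup.sC_sq 0) (CoxGroup.sC_sq 1) _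
    (CoxGroup.sign_sC 0) (CoxGroup.sign_sC 1) ?_ hw
  have : Set.range (sC M) = {sC M 0, sC M 1} :=
    Set.ext fun x => by simp [Fin.exists_fin_two, eq_comm]
  rw [← this]
  exact (PresentedGroup.closure_range_of _).symm ▸ Subgroup.mem_top w

namespace ArtinGroup

variable {m : ℕ} {G : Type*} [Group G]

def liftI2 (a b : G) (h : altProd a b m = altProd b a m) : ArtinGroup (I2 m) →* G :=
  lift ![a, b] fun i j => by fin_cases i <;> fin_cases j <;> simp [I2, h]

@[simp] lemma liftI2_σA_zero (a b : G) (h : altProd a b m = altProd b a m) :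
    liftI2 a b h (σA (I2 m) 0) = a :=
  lift_σA _ _ 0

@[simp] lemma liftI2_σA_one (a b : G) (h : altProd a b m = altProd b a m) :
    liftI2 a b h (σA (I2 m) 1) = b :=
  lift_σA _ _ 1

lemma altProd_σA_I2 :
    altProd (σA (I2 m) 0) (σA (I2 m) 1) m = altProd (σA (I2 m) 1) (σA (I2 m) 0) m :=
  altProd_σA (M := I2 m) 0 1

lemma map_σA_zero_eq_map_σA_one {H : Type*} [CommGroup H] (hm : Odd m)
    (χ : ArtinGroup (I2 m) →* H) : χ (σA (I2 m) 0) = χ (σA (I2 m) 1) := by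
  obtain ⟨k, rfl⟩ := hm
  have h := congrArg χ altProd_σA_I2
  rwa [map_altProd, map_altProd, altProd_two_mul_add_one, altProd_two_mul_add_one,
    mul_comm (χ (σA _ 1)), mul_right_inj] at h

lemma sign_stdEpi_map_σA_of_odd (hm : Odd m) (Φ : ArtinGroup (I2 m) ≃* ArtinGroup (I2 m))
    (i : Fin 2) : CoxGroup.sign (I2 m) (stdEpi (I2 m) (Φ (σA (I2 m) i))) = ofAdd 1 := by
  set χ := ((CoxGroup.sign (I2 m)).comp (stdEpi (I2 m))).comp Φ.toMonoidHom
  have hχ : χ (σA (I2 m) 0) = χ (σA (I2 m) 1) := map_σA_zero_eq_map_σA_one hm χ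
  have hne : χ (σA (I2 m) 0) ≠ 1 := by
    intro h1
    have hχ1 : χ = 1 := hom_ext_fin_two h1 (hχ ▸ h1)
    simpa [χ] using DFunLike.congr_fun hχ1 (Φ.symm (σA (I2 m) 0))
  have h₀ : χ (σA (I2 m) 0) = ofAdd 1 :=
    (by decide : ∀ c : Multiplicative (ZMod 2), c ≠ 1 → c = ofAdd 1) _ hne
  fin_cases i
  exacts [h₀, hχ ▸ h₀]

end ArtinGroup

lemma SemidirectProduct.act_right_eq_of_commute_inl {N K : Type*} [CommGroup N] [Group K]
    {φ : K →* MulAut N} {g : N ⋊[φ] K} {w : N} (h : Commute g (SemidirectProduct.inl w)) :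
    φ g.right w = w := by
  have h' := congrArg SemidirectProduct.left h.eq
  simp only [SemidirectProduct.mul_left, SemidirectProduct.left_inl,
    SemidirectProduct.right_inl, map_one, MulAut.one_apply] at h'
  rwa [mul_comm w, mul_right_inj] at h'

open LaurentPolynomial

noncomputable def shiftAut (R : Type*) [CommRing R] :
    Multiplicative ℤ →* MulAut (Multiplicative R[T;T⁻¹]) :=
  (MulAutMultiplicative R[T;T⁻¹]).symm.toMonoidHom.comp
    ((DistribMulAction.toAddAut R[T;T⁻¹]ˣ R[T;T⁻¹]).comp (AddMonoidAlgebra.of R ℤ).toHomUnits)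

lemma shiftAut_apply {R : Type*} [CommRing R] (j : ℤ) (f : R[T;T⁻¹]) :
    shiftAut R (ofAdd j) (ofAdd f) = ofAdd (T j * f) := rfl

lemma LaurentPolynomial.T_injective {R : Type*} [CommRing R] [Nontrivial R] :
    Function.Injective (T : ℤ → R[T;T⁻¹]) :=
  AddMonoidAlgebra.single_left_injective one_ne_zero

namespace ArtinGroup

open LaurentPolynomial Matrix

variable {n : ℕ}

lemma σA_mul_σA_pow_mem_center :
    (σA (I2 (2 * n)) 0 * σA (I2 (2 * n)) 1) ^ n ∈ Subgroup.center (ArtinGroup (I2 (2 * n))) := by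
  set s₀ := σA (I2 (2 * n)) 0
  set s₁ := σA (I2 (2 * n)) 1
  have hz : (s₀ * s₁) ^ n = (s₁ * s₀) ^ n := by
    simpa only [altProd_two_mul] using altProd_σA_I2 (m := 2 * n)
  have h₀ : (s₀ * s₁) ^ n * s₀ = s₀ * (s₀ * s₁) ^ n := by rw [mul_pow_mul, hz]
  have h₁ : (s₀ * s₁) ^ n * s₁ = s₁ * (s₀ * s₁) ^ n := by
    nth_rewrite 1 [hz]
    exact mul_pow_mul s₁ s₀ n
  refine Subgroup.mem_center_iff.mpr fun g => ?_
  have hg : g ∈ Subgroup.centralizer {(s₀ * s₁) ^ n} :=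
    PresentedGroup.generated_by _ _ (fun i => Subgroup.mem_centralizer_singleton_iff.mpr (by
      fin_cases i
      exacts [h₀.symm, h₁.symm])) g
  exact Subgroup.mem_centralizer_singleton_iff.mp hg

def exponents (n : ℕ) : ArtinGroup (I2 (2 * n)) →* Multiplicative (Fin 2 → ℤ) :=
  liftI2 (ofAdd (Pi.single 0 1)) (ofAdd (Pi.single 1 1))
    (by rw [altProd_two_mul, altProd_two_mul, mul_comm])

lemma toAdd_exponents_σA (i : Fin 2) :
    toAdd (exponents n (σA (I2 (2 * n)) i)) = Pi.single i 1 := by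
  fin_cases i <;> simp [exponents]

/-- `t := inr (ofAdd 1)` acts on `(ℤ/n)[T, T⁻¹]` by `T`, and `σ₀σ₁` goes to the translation `w` by
`1`, of order `n`, which gives the braid relation. The `t`-degree is the difference of the exponent
sums, and it vanishes on the centralizer of `w` because `Tʲ ≠ 1` for `j ≠ 0`. -/
noncomputable def shiftRep (n : ℕ) : ArtinGroup (I2 (2 * n)) →*
    Multiplicative (ZMod n)[T;T⁻¹] ⋊[shiftAut (ZMod n)] Multiplicative ℤ :=
  let x := SemidirectProduct.inr (ofAdd 1)
  let w := SemidirectProduct.inl (ofAdd 1)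
  liftI2 x (x⁻¹ * w) <| by
    have hw : w ^ n = 1 := by
      rw [← map_pow, ← ofAdd_nsmul, nsmul_one, ← map_natCast (C (R := ZMod n)),
        ZMod.natCast_self, map_zero, ofAdd_zero, map_one]
    have hyx : (x⁻¹ * w * x) ^ n = 1 := by
      simpa [hw] using conj_pow (a := x⁻¹) (b := w) (i := n)
    rw [altProd_two_mul, altProd_two_mul, mul_inv_cancel_left, hw, hyx]

lemma toAdd_shiftRep_right (g : ArtinGroup (I2 (2 * n))) :
    toAdd (shiftRep n g).right = toAdd (exponents n g) 0 - toAdd (exponents n g) 1 := by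
  have h : SemidirectProduct.rightHom.comp (shiftRep n) =
      (AddMonoidHom.toMultiplicative
        (Pi.evalAddMonoidHom (fun _ => ℤ) 0 - Pi.evalAddMonoidHom (fun _ => ℤ) 1)).comp
        (exponents n) :=
    hom_ext_fin_two (by simp [shiftRep, exponents]) (by simp [shiftRep, exponents])
  exact congrArg toAdd (DFunLike.congr_fun h g)

lemma exponents_eq_of_commute (hn : n ≠ 1) {a : ArtinGroup (I2 (2 * n))}
    (ha : Commute a (σA (I2 (2 * n)) 0 * σA (I2 (2 * n)) 1)) :
    toAdd (exponents n a) 0 = toAdd (exponents n a) 1 := by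
  have : Nontrivial (ZMod n) := ZMod.nontrivial_iff.mpr hn
  have hw : shiftRep n (σA (I2 (2 * n)) 0 * σA (I2 (2 * n)) 1) = .inl (ofAdd 1) := by
    simp [shiftRep]
  have hfix := SemidirectProduct.act_right_eq_of_commute_inl (hw ▸ ha.map (shiftRep n))
  rw [← ofAdd_toAdd (shiftRep n a).right, toAdd_shiftRep_right, shiftAut_apply, mul_one,
    ← T_zero] at hfix
  exact sub_eq_zero.mp (T_injective (ofAdd.injective hfix))

def abelMatrix (φ : ArtinGroup (I2 (2 * n)) →* ArtinGroup (I2 (2 * n))) :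
    Matrix (Fin 2) (Fin 2) ℤ :=
  Matrix.of fun i j => toAdd (exponents n (φ (σA (I2 (2 * n)) j))) i

lemma toAdd_exponents_map (φ : ArtinGroup (I2 (2 * n)) →* ArtinGroup (I2 (2 * n)))
    (g : ArtinGroup (I2 (2 * n))) :
    toAdd (exponents n (φ g)) = abelMatrix φ *ᵥ toAdd (exponents n g) := by
  have h : (exponents n).comp φ =
      (AddMonoidHom.toMultiplicative (abelMatrix φ).mulVecLin.toAddMonoidHom).comp (exponents n) :=
    hom_ext_fin_two (by ext i; simp [toAdd_exponents_σA, abelMatrix])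
      (by ext i; simp [toAdd_exponents_σA, abelMatrix])
  exact congrArg toAdd (DFunLike.congr_fun h g)

lemma abelMatrix_comp (φ ψ : ArtinGroup (I2 (2 * n)) →* ArtinGroup (I2 (2 * n))) :
    abelMatrix (φ.comp ψ) = abelMatrix φ * abelMatrix ψ := by
  ext i j
  rw [abelMatrix, of_apply, MonoidHom.comp_apply, toAdd_exponents_map φ]
  rfl

lemma abelMatrix_id : abelMatrix (MonoidHom.id (ArtinGroup (I2 (2 * n)))) = 1 := by
  ext i j
  simp [abelMatrix, toAdd_exponents_σA, one_apply, Pi.single_apply]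

lemma isUnit_det_abelMatrix (Φ : ArtinGroup (I2 (2 * n)) ≃* ArtinGroup (I2 (2 * n))) :
    IsUnit (abelMatrix Φ.toMonoidHom).det :=
  Matrix.isUnit_det_of_right_inverse (B := abelMatrix Φ.symm.toMonoidHom) <| by
    rw [← abelMatrix_comp, ← abelMatrix_id]
    congr 1
    ext g
    simp

lemma toAdd_exponents_σA_mul_σA_pow :
    toAdd (exponents n ((σA (I2 (2 * n)) 0 * σA (I2 (2 * n)) 1) ^ n)) = fun _ => (n : ℤ) := by
  ext i
  fin_cases i <;> simp [toAdd_exponents_σA]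

lemma abelMatrix_row_sum_eq (hn : 2 ≤ n) (Φ : ArtinGroup (I2 (2 * n)) ≃* ArtinGroup (I2 (2 * n))) :
    abelMatrix Φ.toMonoidHom 0 0 + abelMatrix Φ.toMonoidHom 0 1 =
      abelMatrix Φ.toMonoidHom 1 0 + abelMatrix Φ.toMonoidHom 1 1 := by
  set s := σA (I2 (2 * n)) 0 * σA (I2 (2 * n)) 1
  have hcomm : Commute (Φ (s ^ n)) s := by
    have hz : Commute (s ^ n) (Φ.symm s) :=
      (Subgroup.mem_center_iff.mp σA_mul_σA_pow_mem_center (Φ.symm s)).symm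
    simpa using hz.map Φ
  have h := exponents_eq_of_commute (by omega) hcomm
  rw [← MulEquiv.coe_toMonoidHom, toAdd_exponents_map, toAdd_exponents_σA_mul_σA_pow] at h
  simp only [mulVec, dotProduct, Fin.sum_univ_two] at h
  exact mul_right_cancel₀ (by positivity : (n : ℤ) ≠ 0) (by linarith)

lemma sign_stdEpi_eq (g : ArtinGroup (I2 (2 * n))) :
    CoxGroup.sign (I2 (2 * n)) (stdEpi (I2 (2 * n)) g) =
      ofAdd ((toAdd (exponents n g) 0 + toAdd (exponents n g) 1 : ℤ) : ZMod 2) := by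
  have h : (CoxGroup.sign (I2 (2 * n))).comp (stdEpi (I2 (2 * n))) =
      (AddMonoidHom.toMultiplicative ((Int.castAddHom (ZMod 2)).comp
        (Pi.evalAddMonoidHom (fun _ => ℤ) 0 + Pi.evalAddMonoidHom (fun _ => ℤ) 1))).comp
        (exponents n) :=
    hom_ext_fin_two (by simp [exponents]) (by simp [exponents])
  exact DFunLike.congr_fun h g

lemma sign_stdEpi_map_σA_of_even (hn : 2 ≤ n)
    (Φ : ArtinGroup (I2 (2 * n)) ≃* ArtinGroup (I2 (2 * n))) (j : Fin 2) :
    CoxGroup.sign (I2 (2 * n)) (stdEpi (I2 (2 * n)) (Φ (σA (I2 (2 * n)) j))) = ofAdd 1 := by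
  set C := abelMatrix Φ.toMonoidHom
  have hdet : ((C 0 0 * C 1 1 - C 0 1 * C 1 0 : ℤ) : ZMod 2) = 1 := by
    rw [← det_fin_two]
    rcases Int.isUnit_iff.mp (isUnit_det_abelMatrix Φ) with h | h <;> rw [h] <;> rfl
  have hrow := congrArg (Int.cast : ℤ → ZMod 2) (abelMatrix_row_sum_eq hn Φ)
  push_cast at hdet hrow
  have key : ∀ a b c d : ZMod 2, a * d - b * c = 1 → a + b = c + d → a + c = 1 ∧ b + d = 1 := by
    decide
  rw [sign_stdEpi_eq, Int.cast_add]
  obtain ⟨h₀, h₁⟩ := key _ _ _ _ hdet hrow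
  fin_cases j
  exacts [congrArg ofAdd h₀, congrArg ofAdd h₁]

end ArtinGroup

lemma stdEpi_map_σA_sq {m : ℕ} (hm : 3 ≤ m) (Φ : ArtinGroup (I2 m) ≃* ArtinGroup (I2 m))
    (i : Fin 2) : stdEpi (I2 m) (Φ (σA (I2 m) i)) ^ 2 = 1 := by
  refine CoxGroup.sq_eq_one_of_sign ?_
  rcases Nat.even_or_odd m with hm' | hm'
  · obtain ⟨n, rfl⟩ := hm'.two_dvd
    exact ArtinGroup.sign_stdEpi_map_σA_of_even (by omega) Φ i
  · exact ArtinGroup.sign_stdEpi_map_σA_of_odd hm' Φ i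

lemma ker_stdEpi_characteristic {m : ℕ} (hm : 3 ≤ m) : (stdEpi (I2 m)).ker.Characteristic := by
  refine Subgroup.characteristic_iff_le_comap.mpr fun Φ => ?_
  rw [MonoidHom.comap_ker, ker_stdEpi]
  refine Subgroup.normalClosure_le_normal ?_
  rintro _ ⟨i, rfl⟩
  rw [SetLike.mem_coe, MonoidHom.mem_ker, MonoidHom.comp_apply, map_pow, map_pow]
  exact stdEpi_map_σA_sq hm Φ i

/-- For type `I₂(m)`, `m ≥ 3`, the colored Artin group `CA = ker μ` is a characteristic
subgroup of the Artin group `A`. -/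
theorem stmt_5 (m : ℕ) (hm : 3 ≤ m)
    (Φ : ArtinGroup (I2 m) ≃* ArtinGroup (I2 m)) :
    (MonoidHom.ker (stdEpi (I2 m))).map Φ.toMonoidHom = MonoidHom.ker (stdEpi (I2 m)) :=
  Subgroup.characteristic_iff_map_eq.mp (ker_stdEpi_characteristic hm) Φ
end

section
/- Let M be a Coxeter matrix with Coxeter group W generated by s_1, …, s_n, let T be the set of reflections of W, and let A be the Artin group of type M. Then: (1) the assignment σ_i ↦ U_i determines a (unique) group homomorphism U: A → Sym(ℤ × T); (2) for every g ∈ A and (k, r) ∈ ℤ × T, if U(g)(k, r) = (k', r') then u(μ(g))((−1)^k, r) = ((−1)^{k'}, r'), where μ: A → W is the standard epimorphism; (3) for every k ∈ ℤ, the shift L_k ∈ Sym(ℤ × T) defined by L_k(l, t) = (k + l, t) commutes with each U_i, and in particular U(g)(k, t) = L_k(U(g)(0, t)) for all g ∈ A. -/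
open Function

/-- The set of reflections of the Coxeter group of type `M`. -/
def Refl {n : ℕ} (M : Matrix (Fin n) (Fin n) ℕ) : Set (CoxGroup M) :=
  {t | ∃ (w : CoxGroup M) (i : Fin n), t = w * sC M i * w⁻¹}

lemma sC_sq {n : ℕ} (M : Matrix (Fin n) (Fin n) ℕ) (i : Fin n) :
    sC M i * sC M i = 1 := by
  have h1 : (FreeGroup.of i ^ 2 : FreeGroup (Fin n))
      ∈ Subgroup.normalClosure (coxRels M) :=
    Subgroup.subset_normalClosure (Set.mem_union_right _ ⟨i, rfl⟩)
  have h2 : PresentedGroup.mk (coxRels M) (FreeGroup.of i ^ 2) = 1 :=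
    (QuotientGroup.eq_one_iff _).mpr h1
  simpa [sq, map_mul, sC, PresentedGroup.of] using h2

lemma sC_inv {n : ℕ} (M : Matrix (Fin n) (Fin n) ℕ) (i : Fin n) :
    (sC M i)⁻¹ = sC M i :=
  inv_eq_of_mul_eq_one_right (sC_sq M i)

lemma conj_mem_Refl {n : ℕ} (M : Matrix (Fin n) (Fin n) ℕ) (i : Fin n)
    {t : CoxGroup M} (ht : t ∈ Refl M) : sC M i * t * sC M i ∈ Refl M := by
  obtain ⟨w, j, rfl⟩ := ht
  refine ⟨sC M i * w, j, ?_⟩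
  rw [mul_inv_rev, sC_inv]
  simp [mul_assoc]

lemma conj_eq_self_iff {n : ℕ} (M : Matrix (Fin n) (Fin n) ℕ) (i : Fin n)
    (t : CoxGroup M) : sC M i * t * sC M i = sC M i ↔ t = sC M i := by
  constructor
  · intro h
    have h2 : sC M i * (t * sC M i) = sC M i * 1 := by
      rw [mul_one]; rw [← mul_assoc]; exact h
    have h3 : t * sC M i = 1 := mul_left_cancel h2
    calc t = t * sC M i * sC M i := by rw [mul_assoc, sC_sq, mul_one]
    _ = sC M i := by rw [h3, one_mul]
  · rintro rfl
    rw [sC_sq, one_mul]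

open Classical in
/-- The underlying map of `Uᵢ` (with increment `e` on the distinguished reflection). -/
noncomputable def UFun {n : ℕ} (M : Matrix (Fin n) (Fin n) ℕ) (i : Fin n) (e : ℤ) :
    ℤ × Refl M → ℤ × Refl M := fun p =>
  if (p.2 : CoxGroup M) = sC M i then (p.1 + e, p.2)
  else (p.1, ⟨sC M i * p.2 * sC M i, conj_mem_Refl M i p.2.2⟩)

lemma UFun_pos {n : ℕ} (M : Matrix (Fin n) (Fin n) ℕ) (i : Fin n) (e k : ℤ)
    (t : Refl M) (h : (t : CoxGroup M) = sC M i) : UFun M i e (k, t) = (k + e, t) := by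
  simp only [UFun, h, if_pos]

lemma UFun_neg {n : ℕ} (M : Matrix (Fin n) (Fin n) ℕ) (i : Fin n) (e k : ℤ)
    (t : Refl M) (h : ¬ (t : CoxGroup M) = sC M i) :
    UFun M i e (k, t) = (k, ⟨sC M i * t * sC M i, conj_mem_Refl M i t.2⟩) := by
  simp only [UFun, h, if_neg, if_false]

lemma UFun_inverse {n : ℕ} (M : Matrix (Fin n) (Fin n) ℕ) (i : Fin n) (e : ℤ) :
    Function.LeftInverse (UFun M i (-e)) (UFun M i e) := by
  rintro ⟨k, t⟩
  by_cases h : (t : CoxGroup M) = sC M i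
  · rw [UFun_pos M i e k t h, UFun_pos M i (-e) (k + e) t h]
    simp
  · rw [UFun_neg M i e k t h]
    have h' : ¬ (sC M i * (t : CoxGroup M) * sC M i = sC M i) := fun hc =>
      h ((conj_eq_self_iff M i t).mp hc)
    rw [UFun_neg M i (-e) k _ h']
    refine Prod.ext rfl (Subtype.ext ?_)
    show sC M i * (sC M i * (t : CoxGroup M) * sC M i) * sC M i = (t : CoxGroup M)
    calc sC M i * (sC M i * (t : CoxGroup M) * sC M i) * sC M i
        = (sC M i * sC M i) * ((t : CoxGroup M) * (sC M i * sC M i)) := by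
          simp only [mul_assoc]
      _ = (t : CoxGroup M) := by rw [sC_sq]; simp

/-- The permutation `Uᵢ` of `ℤ × T`: `(k, t) ↦ (k, sᵢ t sᵢ)` if `t ≠ sᵢ`, and
`(k, sᵢ) ↦ (k + 1, sᵢ)`. -/
noncomputable def Uperm {n : ℕ} (M : Matrix (Fin n) (Fin n) ℕ) (i : Fin n) :
    Equiv.Perm (ℤ × Refl M) where
  toFun := UFun M i 1
  invFun := UFun M i (-1)
  left_inv := UFun_inverse M i 1
  right_inv := by
    have h := UFun_inverse M i (-1)
    rw [neg_neg] at h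
    exact h

open Classical in
/-- The underlying map of Bourbaki's `uᵢ` on `{±1} × T`. -/
noncomputable def uFun {n : ℕ} (M : Matrix (Fin n) (Fin n) ℕ) (i : Fin n) :
    ℤˣ × Refl M → ℤˣ × Refl M := fun p =>
  if (p.2 : CoxGroup M) = sC M i then (-p.1, p.2)
  else (p.1, ⟨sC M i * p.2 * sC M i, conj_mem_Refl M i p.2.2⟩)

lemma uFun_involutive {n : ℕ} (M : Matrix (Fin n) (Fin n) ℕ) (i : Fin n) :
    Function.Involutive (uFun M i) := by
  rintro ⟨e, t⟩
  by_cases h : (t : CoxGroup M) = sC M i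
  · simp only [uFun, h, if_pos]
    simp
  · have h' : ¬ (sC M i * (t : CoxGroup M) * sC M i = sC M i) := fun hc =>
      h ((conj_eq_self_iff M i t).mp hc)
    simp only [uFun, h, if_neg, if_false, h']
    refine Prod.ext rfl (Subtype.ext ?_)
    show sC M i * (sC M i * (t : CoxGroup M) * sC M i) * sC M i = (t : CoxGroup M)
    calc sC M i * (sC M i * (t : CoxGroup M) * sC M i) * sC M i
        = (sC M i * sC M i) * ((t : CoxGroup M) * (sC M i * sC M i)) := by
          simp only [mul_assoc]
      _ = (t : CoxGroup M) := by rw [sC_sq]; simp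

/-- Bourbaki's permutation `uᵢ` of `{±1} × T`: `(ε, t) ↦ (ε, sᵢ t sᵢ)` if `t ≠ sᵢ`,
and `(ε, sᵢ) ↦ (-ε, sᵢ)`. -/
noncomputable def uperm {n : ℕ} (M : Matrix (Fin n) (Fin n) ℕ) (i : Fin n) :
    Equiv.Perm (ℤˣ × Refl M) :=
  (uFun_involutive M i).toPerm _

/-- The shift `L_k : (l, t) ↦ (k + l, t)` of `ℤ × T`. -/
def Lshift {n : ℕ} (M : Matrix (Fin n) (Fin n) ℕ) (k : ℤ) :
    Equiv.Perm (ℤ × Refl M) :=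
  (Equiv.addLeft k).prodCongr (Equiv.refl (Refl M))


/-!
For a word `L = i₁ ⋯ iₘ` write `π(L) = s_{i₁} ⋯ s_{iₘ}` and let
`r_p = s_{i₁} ⋯ s_{i_{p-1}} s_{i_p} s_{i_{p-1}} ⋯ s_{i₁}` be its left inversion sequence.
Induction on `L` gives
`U_{i₁} ⋯ U_{iₘ} (k, t) = (k + #{p | r_p = π(L) t π(L)⁻¹}, π(L) t π(L)⁻¹)`.
On the two sides of a braid relation `π` agrees by the Coxeter relation, and the inversion
sequence of `⟨i j⟩^m` is `((s_i s_j)^p s_i)_{p<m}`; since `(s_i s_j)^m = 1`, it is the reverse of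
that of `⟨j i⟩^m`, so the counts agree and `σᵢ ↦ Uᵢ` respects the Artin relations.
The remaining claims say that a map intertwines two actions of `A`; the elements for which this
holds form a subgroup, so it suffices to check them on the generators.
-/

section LeftInvSeq

variable {ι G : Type*} [Group G] (s : ι → G)

def leftInvSeq : List ι → List G
  | [] => []
  | i :: L => s i :: (leftInvSeq L).map (MulAut.conj (s i))

def altList (i j : ι) : ℕ → List ι
  | 0 => []
  | m + 1 => i :: altList j i m

variable {s}

lemma lift_altWord_s8 (i j : ι) (m : ℕ) :
    FreeGroup.lift s (altWord i j m) = ((altList i j m).map s).prod := by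
  induction m generalizing i j with
  | zero => simp [altWord, altList]
  | succ m ih => simp [altWord, altList, ih]

lemma leftInvSeq_altList (hs : ∀ i, (s i)⁻¹ = s i) (i j : ι) (m : ℕ) :
    leftInvSeq s (altList i j m) = (List.range m).map fun p => (s i * s j) ^ p * s i := by
  induction m generalizing i j with
  | zero => rfl
  | succ m ih =>
    rw [altList, leftInvSeq, ih, List.range_succ_eq_map, List.map_cons, List.map_map,
      List.map_map]
    congr 1
    · simp
    · refine List.map_congr_left fun p _ => ?_
      simp only [Function.comp_apply, MulAut.conj_apply, hs, pow_succ, mul_assoc]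
      rw [← mul_assoc (s i), ← mul_pow_mul]
      simp only [mul_assoc]

lemma prod_altList_mul_inv (hs : ∀ i, (s i)⁻¹ = s i) (i j : ι) (m : ℕ) :
    ((altList i j m).map s).prod * ((altList j i m).map s).prod⁻¹ = (s i * s j) ^ m := by
  induction m generalizing i j with
  | zero => simp [altList]
  | succ m ih =>
    simp only [altList, List.map_cons, List.prod_cons, mul_inv_rev, hs]
    rw [mul_assoc, ← mul_assoc _ _ (s j), ih, ← mul_assoc, ← mul_pow_mul, pow_succ, mul_assoc]

lemma leftInvSeq_altList_swap (hs : ∀ i, (s i)⁻¹ = s i) {i j : ι} {m : ℕ}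
    (h : ((altList i j m).map s).prod = ((altList j i m).map s).prod) :
    leftInvSeq s (altList j i m) = (leftInvSeq s (altList i j m)).reverse := by
  have hm : (s i * s j) ^ m = 1 := by
    rw [← prod_altList_mul_inv hs, h, mul_inv_cancel]
  have hrev : (List.range m).reverse = (List.range m).map (m - 1 - ·) := by
    simpa [← List.range_eq_range'] using List.reverse_range' (s := 0) (n := m)
  rw [leftInvSeq_altList hs, leftInvSeq_altList hs, ← List.map_reverse, hrev, List.map_map]
  refine List.map_congr_left fun p hp => ?_
  replace hp : p < m := List.mem_range.mp hp
  have hsq : s i * s i = 1 := by simpa [hs] using mul_inv_cancel (s i)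
  have hcompl : (s i * s j) ^ (m - 1 - p) * (s i * s j) ^ (p + 1) = 1 := by
    rw [← pow_add, show m - 1 - p + (p + 1) = m by omega, hm]
  calc (s j * s i) ^ p * s j = (s j * s i) ^ (p + 1) * s i := by
        rw [pow_succ, mul_assoc, mul_assoc, hsq, mul_one]
    _ = ((s i * s j) ^ (p + 1))⁻¹ * s i := by rw [← inv_pow, mul_inv_rev, hs, hs]
    _ = (s i * s j) ^ (m - 1 - p) * s i := by rw [← eq_inv_of_mul_eq_one_left hcompl]

lemma count_leftInvSeq_cons [DecidableEq G] (i : ι) (L : List ι) (x : G) :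
    (leftInvSeq s (i :: L)).count (MulAut.conj (s i) x) =
      (leftInvSeq s L).count x + if x = s i then 1 else 0 := by
  have hfix : MulAut.conj (s i) (s i) = s i := by simp
  rw [leftInvSeq, List.count_cons, List.count_map_of_injective _ _ (MulAut.conj (s i)).injective]
  have hiff : s i = MulAut.conj (s i) x ↔ x = s i :=
    eq_comm.trans ((MulAut.conj (s i)).injective.eq_iff' hfix)
  simp only [beq_iff_eq, hiff]

end LeftInvSeq

lemma semiconj_of_closure_eq_top {A X Y : Type*} [Group A] {S : Set A}
    (hS : Subgroup.closure S = ⊤) (U : A →* Equiv.Perm X) (V : A →* Equiv.Perm Y) {f : X → Y}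
    (h : ∀ a ∈ S, Semiconj f (U a) (V a)) (g : A) : Semiconj f (U g) (V g) := by
  have hg : g ∈ Subgroup.closure S := hS ▸ Subgroup.mem_top g
  induction hg using Subgroup.closure_induction with
  | mem a ha => exact h a ha
  | one => simpa using Semiconj.id_right
  | mul a b _ _ ha hb => simpa using ha.comp_right hb
  | inv a _ ha => simpa using ha.inverses_right (U a).right_inv (V a).left_inv

section Artin

variable {n : ℕ} (M : Matrix (Fin n) (Fin n) ℕ)

open Classical

lemma conj_apply_mem_Refl (w : CoxGroup M) (t : Refl M) :
    MulAut.conj w (t : CoxGroup M) ∈ Refl M := by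
  obtain ⟨v, j, ht⟩ := t.2
  exact ⟨w * v, j, by simp [ht, mul_assoc]⟩

lemma prod_altList_sC_braid {i j : Fin n} (hij : i ≠ j) (h0 : M i j ≠ 0) :
    ((altList i j (M i j)).map (sC M)).prod = ((altList j i (M i j)).map (sC M)).prod := by
  have h := PresentedGroup.one_of_mem (rels := coxRels M) (Or.inl ⟨i, j, hij, h0, rfl⟩)
  rw [← lift_of_eq_mk, map_mul, map_inv, mul_inv_eq_one, lift_altWord_s8, lift_altWord_s8] at h
  exact h

lemma Uperm_apply (i : Fin n) (k : ℤ) (t : Refl M) :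
    Uperm M i (k, t) =
      (k + if (t : CoxGroup M) = sC M i then 1 else 0,
        ⟨MulAut.conj (sC M i) t, conj_apply_mem_Refl M _ t⟩) := by
  by_cases h : (t : CoxGroup M) = sC M i
  · refine (UFun_pos M i 1 k t h).trans (Prod.ext (by simp [h]) (Subtype.ext ?_))
    simp [h]
  · refine (UFun_neg M i 1 k t h).trans (Prod.ext (by simp [h]) (Subtype.ext ?_))
    simp [sC_inv]

lemma uperm_apply (i : Fin n) (ε : ℤˣ) (t : Refl M) :
    uperm M i (ε, t) =
      (if (t : CoxGroup M) = sC M i then -ε else ε,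
        ⟨MulAut.conj (sC M i) t, conj_apply_mem_Refl M _ t⟩) := by
  by_cases h : (t : CoxGroup M) = sC M i
  · refine Prod.ext (by simp [uperm, uFun, h]) (Subtype.ext ?_)
    simp [uperm, uFun, h]
  · refine Prod.ext (by simp [uperm, uFun, h]) (Subtype.ext ?_)
    simp [uperm, uFun, h, sC_inv]

lemma prod_map_Uperm_apply (L : List (Fin n)) (k : ℤ) (t : Refl M) :
    (L.map (Uperm M)).prod (k, t) =
      (k + (leftInvSeq (sC M) L).count (MulAut.conj (L.map (sC M)).prod t),
        ⟨MulAut.conj (L.map (sC M)).prod t, conj_apply_mem_Refl M _ t⟩) := by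
  induction L with
  | nil => simp [leftInvSeq]
  | cons i L ih =>
    rw [List.map_cons, List.prod_cons, Equiv.Perm.mul_apply, ih, Uperm_apply]
    refine Prod.ext ?_ (Subtype.ext ?_)
    · simp only [List.map_cons, List.prod_cons, map_mul, MulAut.mul_apply, count_leftInvSeq_cons]
      push_cast
      ring
    · simp only [List.map_cons, List.prod_cons, map_mul, MulAut.mul_apply]

lemma Uperm_braid {i j : Fin n} (hij : i ≠ j) (h0 : M i j ≠ 0) :
    ((altList i j (M i j)).map (Uperm M)).prod = ((altList j i (M i j)).map (Uperm M)).prod := by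
  have hW := prod_altList_sC_braid M hij h0
  ext ⟨k, t⟩ : 1
  rw [prod_map_Uperm_apply, prod_map_Uperm_apply, leftInvSeq_altList_swap (sC_inv M) hW,
    List.count_reverse, hW]

lemma semiconj_of_forall_σA {X Y : Type*} (U : ArtinGroup M →* Equiv.Perm X)
    (V : ArtinGroup M →* Equiv.Perm Y) {f : X → Y}
    (h : ∀ i, Semiconj f (U (σA M i)) (V (σA M i))) (g : ArtinGroup M) :
    Semiconj f (U g) (V g) :=
  semiconj_of_closure_eq_top (PresentedGroup.closure_range_of _) U V
    (by rintro _ ⟨i, rfl⟩; exact h i) g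

noncomputable def Uhom : ArtinGroup M →* Equiv.Perm (ℤ × Refl M) :=
  PresentedGroup.toGroup (f := Uperm M) <| by
    rintro r ⟨i, j, hij, h0, rfl⟩
    rw [map_mul, map_inv, lift_altWord_s8, lift_altWord_s8, Uperm_braid M hij h0, mul_inv_cancel]

lemma Uhom_σA (i : Fin n) : Uhom M (σA M i) = Uperm M i :=
  PresentedGroup.toGroup.of _

lemma semiconj_Uperm_uperm (i : Fin n) :
    Semiconj (Prod.map (fun k : ℤ => (-1 : ℤˣ) ^ k) id) (Uperm M i) (uperm M i) := by
  rintro ⟨k, t⟩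
  simp only [Prod.map_apply, id, Uperm_apply, uperm_apply]
  split_ifs <;> simp [zpow_add_one]

lemma commute_Lshift_Uperm (k : ℤ) (i : Fin n) : Commute (Lshift M k) (Uperm M i) := by
  ext ⟨l, t⟩ : 1
  simp [Lshift, Uperm_apply, add_assoc]

end Artin

theorem stmt_8_general {n : ℕ} (M : Matrix (Fin n) (Fin n) ℕ) :
    (∃! U : ArtinGroup M →* Equiv.Perm (ℤ × Refl M),
      ∀ i, U (σA M i) = Uperm M i) ∧
    (∀ U : ArtinGroup M →* Equiv.Perm (ℤ × Refl M), (∀ i, U (σA M i) = Uperm M i) →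
      ∀ u : CoxGroup M →* Equiv.Perm (ℤˣ × Refl M), (∀ i, u (sC M i) = uperm M i) →
      ∀ (g : ArtinGroup M) (k k' : ℤ) (r r' : Refl M),
        U g (k, r) = (k', r') →
        u (stdEpi M g) ((-1 : ℤˣ) ^ k, r) = ((-1 : ℤˣ) ^ k', r')) ∧
    (∀ (k : ℤ) (i : Fin n), Lshift M k * Uperm M i = Uperm M i * Lshift M k) ∧
    (∀ U : ArtinGroup M →* Equiv.Perm (ℤ × Refl M), (∀ i, U (σA M i) = Uperm M i) →
      ∀ (g : ArtinGroup M) (k : ℤ) (t : Refl M),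
        U g (k, t) = Lshift M k (U g (0, t))) := by
  refine ⟨⟨Uhom M, Uhom_σA M, fun U hU => PresentedGroup.ext fun i => (hU i).trans
    (Uhom_σA M i).symm⟩, ?_, fun k i => (commute_Lshift_Uperm M k i).eq, ?_⟩
  · intro U hU u hu g k k' r r' hg
    have h := semiconj_of_forall_σA M U (u.comp (stdEpi M))
      (f := Prod.map (fun k : ℤ => (-1 : ℤˣ) ^ k) id)
      (fun i => by simpa only [MonoidHom.comp_apply, hU i, stdEpi_of, hu i]
        using semiconj_Uperm_uperm M i) g (k, r)
    simpa [hg] using h.symm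
  · intro U hU g k t
    have h := semiconj_of_forall_σA M U U (f := Lshift M k)
      (fun i => by rw [hU i]; exact DFunLike.congr_fun (commute_Lshift_Uperm M k i).eq)
      g (0, t)
    simpa [Lshift] using h.symm

/-- Lemma 3.7: (1) `σᵢ ↦ Uᵢ` determines a unique homomorphism `U : A → Sym(ℤ × T)`;
(2) `U` is compatible, via `μ` and `(-1)^k`, with Bourbaki's action `u` of `W` on
`{±1} × T`; (3) each shift `L_k` commutes with each `Uᵢ`, and
`U(g)(k, t) = L_k(U(g)(0, t))`. -/
theorem stmt_8 {n : ℕ} (M : Matrix (Fin n) (Fin n) ℕ)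
    (hdiag : ∀ i, M i i = 1) (hsymm : ∀ i j, M i j = M j i)
    (hoff : ∀ i j, i ≠ j → M i j ≠ 1) :
    (∃! U : ArtinGroup M →* Equiv.Perm (ℤ × Refl M),
      ∀ i, U (σA M i) = Uperm M i) ∧
    (∀ U : ArtinGroup M →* Equiv.Perm (ℤ × Refl M), (∀ i, U (σA M i) = Uperm M i) →
      ∀ u : CoxGroup M →* Equiv.Perm (ℤˣ × Refl M), (∀ i, u (sC M i) = uperm M i) →
      ∀ (g : ArtinGroup M) (k k' : ℤ) (r r' : Refl M),
        U g (k, r) = (k', r') →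
        u (stdEpi M g) ((-1 : ℤˣ) ^ k, r) = ((-1 : ℤˣ) ^ k', r')) ∧
    (∀ (k : ℤ) (i : Fin n), Lshift M k * Uperm M i = Uperm M i * Lshift M k) ∧
    (∀ U : ArtinGroup M →* Equiv.Perm (ℤ × Refl M), (∀ i, U (σA M i) = Uperm M i) →
      ∀ (g : ArtinGroup M) (k : ℤ) (t : Refl M),
        U g (k, t) = Lshift M k (U g (0, t))) :=
  stmt_8_general M
end
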